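/- arXiv:2312.00927 — 3 statements merged into one kernel-verified Lean document; each statement's English description precedes it below -/
import Mathlib

section
/- For every T > 0, m ≥ 1, κ ∈ ℕ and every strongly measurable f : [0,T] → X with ∫_0^T ‖f(s)‖^m ds < ∞, the shifted dyadic projection satisfies ‖Proĵ_κ f‖_{L^m(0,T;X)}^m ≤ ‖f‖_{L^m(0,T;X)}^m + (T/2^κ)·‖f(0)‖^m. -/
open MeasureTheory Set
open scoped ENNReal NNReal

/-- The shifted dyadic projection `Proĵ_κ`: it equals `f 0` on `[0, T/2^κ)`, and on
each dyadic interval `[T·k/2^κ, T·(k+1)/2^κ)` with `k ≥ 1` it takes the value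
`(2^κ/T) ∫_{t_{k-1}}^{t_k} f`. -/
noncomputable def shiftedProj {X : Type*} [NormedAddCommGroup X] [NormedSpace ℝ X]
    (T : ℝ) (κ : ℕ) (f : ℝ → X) (s : ℝ) : X :=
  if s < T / 2 ^ κ then f 0
  else ((2 : ℝ) ^ κ / T) •
    ∫ r in Ico (T * ((⌊s * 2 ^ κ / T⌋₊ : ℝ) - 1) / 2 ^ κ)
        (T * (⌊s * 2 ^ κ / T⌋₊ : ℝ) / 2 ^ κ), f r

/-!
On the cell `[t_{k+1}, t_{k+2})` the projection is constant, equal to the average of `f` over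
the preceding cell `[t_k, t_{k+1})`, which has the same length; by Jensen's inequality its
contribution to `∫ ‖·‖^m` is at most that of `f` on the preceding cell. Summing over the cells,
the first cell of the projection, where it equals `f 0`, contributes `(T/2^κ)‖f 0‖^m`, and all
others are dominated by `∫_0^T ‖f‖^m`.
-/

theorem enorm_integral_rpow_le_lintegral_enorm_rpow {α E : Type*} [MeasurableSpace α]
    [NormedAddCommGroup E] [NormedSpace ℝ E] {μ : Measure α} [IsProbabilityMeasure μ]
    {m : ℝ} (hm : 1 ≤ m) {g : α → E} (hg : AEStronglyMeasurable g μ) :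
    ‖∫ x, g x ∂μ‖ₑ ^ m ≤ ∫⁻ x, ‖g x‖ₑ ^ m ∂μ := by
  calc ‖∫ x, g x ∂μ‖ₑ ^ m ≤ eLpNorm' g 1 μ ^ m := by
        gcongr
        simpa [eLpNorm'_eq_lintegral_enorm] using enorm_integral_le_lintegral_enorm g
    _ ≤ eLpNorm' g m μ ^ m := by
        gcongr
        exact eLpNorm'_le_eLpNorm'_of_exponent_le one_pos hm μ hg
    _ = ∫⁻ x, ‖g x‖ₑ ^ m ∂μ := by
        rw [eLpNorm'_eq_lintegral_enorm, ← ENNReal.rpow_mul, one_div_mul_cancel (by linarith),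
          ENNReal.rpow_one]

theorem enorm_average_rpow_mul_measure_univ_le {α E : Type*} [MeasurableSpace α]
    [NormedAddCommGroup E] [NormedSpace ℝ E] {μ : Measure α} [IsFiniteMeasure μ]
    {m : ℝ} (hm : 1 ≤ m) {g : α → E} (hg : AEStronglyMeasurable g μ) :
    ‖⨍ x, g x ∂μ‖ₑ ^ m * μ univ ≤ ∫⁻ x, ‖g x‖ₑ ^ m ∂μ := by
  rcases eq_zero_or_neZero μ with rfl | hμ
  · simp
  calc ‖⨍ x, g x ∂μ‖ₑ ^ m * μ univ
      ≤ (∫⁻ x, ‖g x‖ₑ ^ m ∂(μ univ)⁻¹ • μ) * μ univ := by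
        gcongr
        exact enorm_integral_rpow_le_lintegral_enorm_rpow hm (hg.smul_measure _)
    _ = ∫⁻ x, ‖g x‖ₑ ^ m ∂μ := by
        rw [lintegral_smul_measure, smul_eq_mul, mul_comm, ← mul_assoc,
          ENNReal.mul_inv_cancel (NeZero.ne _) (measure_ne_top _ _), one_mul]

theorem lintegral_Ico_eq_sum_Ico_succ {α : Type*} [LinearOrder α] [TopologicalSpace α]
    [OrderClosedTopology α] [MeasurableSpace α] [OpensMeasurableSpace α] (μ : Measure α)
    {t : ℕ → α} (ht : Monotone t) (g : α → ℝ≥0∞) (n : ℕ) :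
    ∫⁻ s in Ico (t 0) (t n), g s ∂μ
      = ∑ k ∈ Finset.range n, ∫⁻ s in Ico (t k) (t (k + 1)), g s ∂μ := by
  induction n with
  | zero => simp
  | succ n ih =>
    rw [Finset.sum_range_succ, ← ih, ← Ico_union_Ico_eq_Ico (ht n.zero_le) (ht n.le_succ),
      lintegral_union measurableSet_Ico Ico_disjoint_Ico_same]

noncomputable def dyadicPoint (T : ℝ) (κ k : ℕ) : ℝ := T * k / 2 ^ κ

section DyadicPoint

variable {T : ℝ} {κ : ℕ}

theorem dyadicPoint_zero : dyadicPoint T κ 0 = 0 := by simp [dyadicPoint]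

theorem dyadicPoint_one : dyadicPoint T κ 1 = T / 2 ^ κ := by simp [dyadicPoint]

theorem dyadicPoint_two_pow : dyadicPoint T κ (2 ^ κ) = T := by simp [dyadicPoint]

theorem dyadicPoint_succ_sub (k : ℕ) :
    dyadicPoint T κ (k + 1) - dyadicPoint T κ k = T / 2 ^ κ := by
  simp only [dyadicPoint]; push_cast; ring

theorem dyadicPoint_monotone (hT : 0 ≤ T) : Monotone (dyadicPoint T κ) := fun a b hab => by
  unfold dyadicPoint; gcongr

theorem volume_Ico_dyadicPoint (k : ℕ) :
    volume (Ico (dyadicPoint T κ k) (dyadicPoint T κ (k + 1))) = ENNReal.ofReal (T / 2 ^ κ) := by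
  rw [Real.volume_Ico, dyadicPoint_succ_sub]

theorem floor_mul_two_pow_div_eq {j : ℕ} {s : ℝ} (hT : 0 < T)
    (hs : s ∈ Ico (dyadicPoint T κ j) (dyadicPoint T κ (j + 1))) : ⌊s * 2 ^ κ / T⌋₊ = j := by
  obtain ⟨hlo, hhi⟩ := hs
  simp only [dyadicPoint, Nat.cast_succ] at hlo hhi
  rw [div_le_iff₀ (by positivity)] at hlo
  rw [lt_div_iff₀ (by positivity)] at hhi
  rw [Nat.floor_eq_iff (div_nonneg ((by positivity : 0 ≤ T * j).trans hlo) hT.le),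
    le_div_iff₀ hT, div_lt_iff₀ hT]
  constructor <;> linarith

end DyadicPoint

section ShiftedProj

variable {X : Type*} [NormedAddCommGroup X] [NormedSpace ℝ X] {T : ℝ} {κ : ℕ} (f : ℝ → X)

theorem shiftedProj_eq_setAverage (hT : 0 < T) {j : ℕ} {s : ℝ}
    (hs : s ∈ Ico (dyadicPoint T κ (j + 1)) (dyadicPoint T κ (j + 2))) :
    shiftedProj T κ f s = ⨍ r in Ico (dyadicPoint T κ j) (dyadicPoint T κ (j + 1)), f r := by
  have hs_ge : T / 2 ^ κ ≤ s :=
    dyadicPoint_one (T := T) ▸ (dyadicPoint_monotone hT.le (by omega)).trans hs.1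
  rw [shiftedProj, if_neg hs_ge.not_gt, floor_mul_two_pow_div_eq hT hs, setAverage_eq,
    measureReal_def, volume_Ico_dyadicPoint, ENNReal.toReal_ofReal (by positivity), inv_div]
  simp [dyadicPoint]

theorem setLIntegral_shiftedProj_first_cell (m : ℝ) :
    ∫⁻ s in Ico (dyadicPoint T κ 0) (dyadicPoint T κ 1), ‖shiftedProj T κ f s‖ₑ ^ m
      = ENNReal.ofReal (T / 2 ^ κ) * ‖f 0‖ₑ ^ m := by
  rw [setLIntegral_congr_fun measurableSet_Ico fun s hs => by
      rw [shiftedProj, if_pos (dyadicPoint_one (T := T) ▸ hs.2)],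
    setLIntegral_const, volume_Ico_dyadicPoint, mul_comm]

theorem setLIntegral_shiftedProj_succ_cell_le (hT : 0 < T) {m : ℝ} (hm : 1 ≤ m) (j : ℕ)
    (hf : AEStronglyMeasurable f
      (volume.restrict (Ico (dyadicPoint T κ j) (dyadicPoint T κ (j + 1))))) :
    ∫⁻ s in Ico (dyadicPoint T κ (j + 1)) (dyadicPoint T κ (j + 2)), ‖shiftedProj T κ f s‖ₑ ^ m
      ≤ ∫⁻ s in Ico (dyadicPoint T κ j) (dyadicPoint T κ (j + 1)), ‖f s‖ₑ ^ m := by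
  have : IsFiniteMeasure (volume.restrict (Ico (dyadicPoint T κ j) (dyadicPoint T κ (j + 1)))) :=
    isFiniteMeasure_restrict.mpr measure_Ico_lt_top.ne
  rw [setLIntegral_congr_fun measurableSet_Ico fun s hs => by
      rw [shiftedProj_eq_setAverage f hT hs],
    setLIntegral_const, volume_Ico_dyadicPoint, ← volume_Ico_dyadicPoint (k := j),
    ← Measure.restrict_apply_univ]
  exact enorm_average_rpow_mul_measure_univ_le hm hf

end ShiftedProj

theorem shiftedProj_Lm_pow_le_general {X : Type*} [NormedAddCommGroup X] [NormedSpace ℝ X]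
    (T : ℝ) (hT : 0 < T) (m : ℝ) (hm : 1 ≤ m) (κ : ℕ) (f : ℝ → X)
    (hf : AEStronglyMeasurable f (volume.restrict (Ioc 0 T))) :
    ∫⁻ s in Ioc (0 : ℝ) T, (‖shiftedProj T κ f s‖₊ : ℝ≥0∞) ^ m
      ≤ (∫⁻ s in Ioc (0 : ℝ) T, (‖f s‖₊ : ℝ≥0∞) ^ m) +
        ENNReal.ofReal (T / 2 ^ κ) * (‖f 0‖₊ : ℝ≥0∞) ^ m := by
  set t := dyadicPoint T κ
  have ht : Monotone t := dyadicPoint_monotone hT.le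
  obtain ⟨n, hn⟩ : ∃ n, 2 ^ κ = n + 1 := Nat.exists_eq_add_one.mpr (by positivity)
  have hIco : Ico (t 0) (t (n + 1)) = Ico 0 T := by
    rw [← hn]; exact congrArg₂ Ico dyadicPoint_zero dyadicPoint_two_pow
  rw [← Measure.restrict_congr_set Ico_ae_eq_Ioc, ← hIco] at hf
  rw [← setLIntegral_congr Ico_ae_eq_Ioc, ← setLIntegral_congr Ico_ae_eq_Ioc, ← hIco]
  calc ∫⁻ s in Ico (t 0) (t (n + 1)), ‖shiftedProj T κ f s‖ₑ ^ m
      = (∑ j ∈ Finset.range n,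
          ∫⁻ s in Ico (t (j + 1)) (t (j + 2)), ‖shiftedProj T κ f s‖ₑ ^ m)
        + ∫⁻ s in Ico (t 0) (t 1), ‖shiftedProj T κ f s‖ₑ ^ m := by
        rw [lintegral_Ico_eq_sum_Ico_succ _ ht, Finset.sum_range_succ']
    _ ≤ (∑ j ∈ Finset.range n, ∫⁻ s in Ico (t j) (t (j + 1)), ‖f s‖ₑ ^ m)
        + ENNReal.ofReal (T / 2 ^ κ) * ‖f 0‖ₑ ^ m := by
        refine add_le_add (Finset.sum_le_sum fun j hj => ?_)
          (setLIntegral_shiftedProj_first_cell f m).le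
        exact setLIntegral_shiftedProj_succ_cell_le f hT hm j
          (hf.mono_set (Ico_subset_Ico (ht j.zero_le)
            (ht (Nat.succ_le_succ (Finset.mem_range.mp hj).le))))
    _ ≤ (∫⁻ s in Ico (t 0) (t (n + 1)), ‖f s‖ₑ ^ m)
        + ENNReal.ofReal (T / 2 ^ κ) * ‖f 0‖ₑ ^ m := by
        rw [← lintegral_Ico_eq_sum_Ico_succ _ ht]
        exact add_le_add_left (lintegral_mono_set (Ico_subset_Ico_right (ht n.le_succ))) _

/-- For every `T > 0`, `m ≥ 1`, `κ ∈ ℕ` and every strongly measurable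
`f : [0,T] → X` with `∫_0^T ‖f(s)‖^m ds < ∞`, the shifted dyadic projection satisfies
`‖Proĵ_κ f‖_{L^m(0,T;X)}^m ≤ ‖f‖_{L^m(0,T;X)}^m + (T/2^κ)·‖f(0)‖^m`. -/
theorem shiftedProj_Lm_pow_le {X : Type*} [NormedAddCommGroup X] [NormedSpace ℝ X]
    (T : ℝ) (hT : 0 < T) (m : ℝ) (hm : 1 ≤ m) (κ : ℕ) (f : ℝ → X)
    (hf : AEStronglyMeasurable f (volume.restrict (Ioc 0 T)))
    (hfm : ∫⁻ s in Ioc (0 : ℝ) T, (‖f s‖₊ : ℝ≥0∞) ^ m < ⊤) :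
    ∫⁻ s in Ioc (0 : ℝ) T, (‖shiftedProj T κ f s‖₊ : ℝ≥0∞) ^ m
      ≤ (∫⁻ s in Ioc (0 : ℝ) T, (‖f s‖₊ : ℝ≥0∞) ^ m) +
        ENNReal.ofReal (T / 2 ^ κ) * (‖f 0‖₊ : ℝ≥0∞) ^ m :=
  shiftedProj_Lm_pow_le_general T hT m hm κ f hf
end

section
/- Let S be a Polish space equipped with its Borel σ-algebra 𝒮, and let (S_n)_{n∈ℕ} ⊆ 𝒮 be an increasing sequence of measurable sets with ⋃_n S_n = S. Let M be the set of all measures θ on (S, 𝒮) that take values in ℕ ∪ {∞} (i.e., for every B ∈ 𝒮, either θ(B) = ∞ or θ(B) ∈ ℕ) and satisfy θ(S_n) < ∞ for every n ∈ ℕ, and equip M with the σ-algebra ℳ generated by the evaluation maps i_B : M → ℕ ∪ {∞}, θ ↦ θ(B), for B ∈ 𝒮. Then the measurable space (M, ℳ) is Polish, i.e., there exists a Polish topology on M whose Borel σ-algebra equals ℳ (M is a standard Borel space). -/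
open MeasureTheory
open scoped ENNReal

/-- The set of `(ℕ ∪ {∞})`-valued measures `θ` on a measurable space `S` which are
finite on each member of the exhausting family `Sn`. -/
def NatValuedMeasures (S : Type*) [MeasurableSpace S] (Sn : ℕ → Set S) : Type _ :=
  {θ : Measure S // (∀ B : Set S, MeasurableSet B → θ B = ⊤ ∨ ∃ k : ℕ, θ B = k) ∧
    ∀ n : ℕ, θ (Sn n) < ⊤}

/-- The σ-algebra `ℳ` on `NatValuedMeasures S Sn` generated by the evaluation maps
`i_B : θ ↦ θ(B)`, `B` measurable. -/
def evalSigmaAlgebra (S : Type*) [MeasurableSpace S] (Sn : ℕ → Set S) :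
    MeasurableSpace (NatValuedMeasures S Sn) :=
  ⨆ (B : Set S) (_ : MeasurableSet B),
    MeasurableSpace.comap (fun θ : NatValuedMeasures S Sn => (θ.val : Measure S) B)
      inferInstance

/-!
Every `θ` in `NatValuedMeasures S Sn` is a countable sum of Dirac masses whose atoms can be listed
measurably in `θ`: push `θ` restricted to the `n`-th piece of `disjointed Sn` into `ℝ≥0∞` along
a Borel embedding `e` of `S` avoiding `⊤`, and take its quantiles at `1, 2, 3, …`. Quantiles
beyond the total mass are `sInf ∅ = ⊤`, outside the range of `e`, so the pullback along `e` of
the counting measure of the listed points recovers `θ`. Thus `NatValuedMeasures S Sn` is a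
measurable retract of the standard Borel space `ℕ × ℕ → ℝ≥0∞`, hence Borel isomorphic to the
measurable set of fixed points of the corresponding idempotent.
-/

open Set Measure

theorem MeasurableEquiv.standardBorelSpace {α β : Type*} [MeasurableSpace α] [MeasurableSpace β]
    [StandardBorelSpace β] (f : α ≃ᵐ β) : StandardBorelSpace α := by
  let := upgradeStandardBorel β
  let _ : TopologicalSpace α := .induced f inferInstance
  have : PolishSpace α := f.toEquiv.polishSpace_induced
  have : BorelSpace α := ⟨by
    rw [borel_comap, ← BorelSpace.measurable_eq (α := β)]
    exact f.measurableEmbedding.comap_eq.symm⟩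
  infer_instance

theorem StandardBorelSpace.of_leftInverse {α β : Type*} [MeasurableSpace α] [MeasurableSpace β]
    [StandardBorelSpace β] {f : α → β} {g : β → α} (hf : Measurable f) (hg : Measurable g)
    (hgf : Function.LeftInverse g f) : StandardBorelSpace α := by
  have hfix : MeasurableSet {b | f (g b) = b} := measurableSet_eq_fun (hf.comp hg) measurable_id
  have := hfix.standardBorel
  exact MeasurableEquiv.standardBorelSpace (β := {b | f (g b) = b})
    { toFun a := ⟨f a, congrArg f (hgf a)⟩
      invFun b := g b
      left_inv := hgf
      right_inv b := Subtype.ext b.2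
      measurable_toFun := hf.subtype_mk
      measurable_invFun := hg.comp measurable_subtype_coe }

theorem MeasureTheory.Measure.sum_dirac_apply {ι α : Type*} [MeasurableSpace α] (x : ι → α)
    {A : Set α} (hA : MeasurableSet A) : sum (fun i => dirac (x i)) A = (x ⁻¹' A).encard := by
  have hind : ∀ i, A.indicator 1 (x i) = (x ⁻¹' A).indicator (1 : ι → ℝ≥0∞) i := fun i =>
    (indicator_comp_right x).symm
  simp only [sum_apply _ hA, dirac_apply' _ hA, hind, ← tsum_subtype, Pi.one_apply,
    ENNReal.tsum_set_one]

namespace MeasureTheory.Measure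

section Quantile

variable {α : Type*} [CompleteLinearOrder α] [MeasurableSpace α]

noncomputable def quantile (ν : Measure α) (t : ℝ≥0∞) : α := sInf {x | t ≤ ν (Iic x)}

theorem quantile_eq_top {ν : Measure α} {t : ℝ≥0∞} (h : ∀ x, ν (Iic x) < t) :
    ν.quantile t = ⊤ :=
  sInf_eq_top.mpr fun x hx => absurd hx (h x).not_ge

variable [TopologicalSpace α] [OrderTopology α] {ν : Measure α} [IsFiniteMeasure ν] {t : ℝ≥0∞}

theorem le_measure_Iic_quantile [FirstCountableTopology α] [OpensMeasurableSpace α]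
    (h : ∃ x, t ≤ ν (Iic x)) : t ≤ ν (Iic (ν.quantile t)) := by
  obtain ⟨u, hu_anti, hu_lim, hu_mem⟩ := exists_seq_tendsto_sInf h (OrderBot.bddBelow _)
  have hIic : Iic (ν.quantile t) = ⋂ n, Iic (u n) := by
    ext x
    simp only [mem_Iic, mem_iInter]
    exact ⟨fun hx n => hx.trans (sInf_le (hu_mem n)), fun hx => ge_of_tendsto' hu_lim hx⟩
  rw [hIic, Antitone.measure_iInter (fun m n hmn => Iic_subset_Iic.mpr (hu_anti hmn))
    (fun n => measurableSet_Iic.nullMeasurableSet) ⟨0, measure_ne_top ν _⟩]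
  exact le_iInf hu_mem

theorem quantile_le_iff_of_le_measure_univ [FirstCountableTopology α] [OpensMeasurableSpace α]
    (ht : t ≤ ν univ) {a : α} : ν.quantile t ≤ a ↔ t ≤ ν (Iic a) :=
  ⟨fun h => (le_measure_Iic_quantile ⟨⊤, by rwa [Iic_top]⟩).trans
    (measure_mono (Iic_subset_Iic.mpr h)), fun h => sInf_le h⟩

theorem quantile_le_iff_of_ne_top [FirstCountableTopology α] [OpensMeasurableSpace α] {a : α}
    (ha : a ≠ ⊤) : ν.quantile t ≤ a ↔ t ≤ ν (Iic a) := by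
  refine ⟨fun h => ?_, fun h => sInf_le h⟩
  have hne : ∃ x, t ≤ ν (Iic x) := by
    by_contra! hempty
    exact ha (top_le_iff.mp (quantile_eq_top hempty ▸ h))
  exact (le_measure_Iic_quantile hne).trans (measure_mono (Iic_subset_Iic.mpr h))

variable [SecondCountableTopology α] [BorelSpace α]

theorem finsetSum_dirac_quantile {N : ℕ} (hN : ν univ = N) (hν : ∀ a, ∃ k : ℕ, ν (Iic a) = k) :
    ∑ j ∈ Finset.range N, dirac (ν.quantile (j + 1)) = ν := by
  refine (ext_of_Iic _ _ fun a => ?_).symm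
  obtain ⟨k, hk⟩ := hν a
  have hkN : k ≤ N := by exact_mod_cast hk ▸ hN ▸ measure_mono (subset_univ (Iic a))
  have hcount : ∀ j ∈ Finset.range N, ν.quantile (j + 1) ≤ a ↔ j < k := fun j hj => by
    rw [quantile_le_iff_of_le_measure_univ, hk]
    · norm_cast
    · rw [hN]; exact_mod_cast Finset.mem_range.mp hj
  have hfilter :
      (Finset.range N).filter (fun j : ℕ => ν.quantile (j + 1) ≤ a) = Finset.range k := by
    ext j
    simp only [Finset.mem_filter, Finset.mem_range]
    exact ⟨fun ⟨hj, hq⟩ => (hcount j (Finset.mem_range.mpr hj)).mp hq,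
      fun hj => ⟨hj.trans_le hkN, (hcount j (Finset.mem_range.mpr (hj.trans_le hkN))).mpr hj⟩⟩
  rw [hk, finsetSum_apply, ← Finset.card_range k, ← hfilter]
  simp [dirac_apply' _ measurableSet_Iic, indicator, Finset.sum_boole]

theorem sum_dirac_quantile_apply (hν : ∀ a, ∃ k : ℕ, ν (Iic a) = k) {A : Set α}
    (hA : MeasurableSet A) (htop : ⊤ ∉ A) :
    sum (fun j : ℕ => dirac (ν.quantile (j + 1))) A = ν A := by
  obtain ⟨N, hN⟩ := hν ⊤
  rw [Iic_top] at hN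
  have htail : ∀ j ∉ Finset.range N, dirac (ν.quantile (j + 1)) A = 0 := fun j hj => by
    have hNj : (N : ℝ≥0∞) < j + 1 := by
      exact_mod_cast Nat.lt_succ_of_le (not_lt.mp (Finset.mem_range.not.mp hj))
    rw [quantile_eq_top fun x => (measure_mono (subset_univ _)).trans_lt (hN ▸ hNj),
      dirac_apply' _ hA, indicator_of_notMem htop]
  rw [sum_apply _ hA, tsum_eq_sum htail, ← finsetSum_apply, finsetSum_dirac_quantile hN hν]

end Quantile

end MeasureTheory.Measure

theorem exists_measurableEmbedding_ennreal_ne_top (S : Type*) [MeasurableSpace S]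
    [StandardBorelSpace S] : ∃ e : S → ℝ≥0∞, MeasurableEmbedding e ∧ ∀ x, e x ≠ ⊤ := by
  obtain ⟨f, hf⟩ := exists_measurableEmbedding_real S
  have hinj : Function.Injective fun x : ℝ => ENNReal.ofReal (Real.exp x) := fun x y h =>
    Real.exp_injective ((ENNReal.ofReal_eq_ofReal_iff (Real.exp_pos x).le
      (Real.exp_pos y).le).mp h)
  refine ⟨_, ((ENNReal.measurable_ofReal.comp Real.measurable_exp).measurableEmbedding
    hinj).comp hf, fun _ => ENNReal.ofReal_ne_top⟩

section Configurations

variable {S : Type*} [MeasurableSpace S] {e : S → ℝ≥0∞}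

noncomputable def configMeasure (e : S → ℝ≥0∞) (s : ℕ × ℕ → ℝ≥0∞) : Measure S :=
  (sum fun p => dirac (s p)).comap e

theorem configMeasure_apply (he : MeasurableEmbedding e) (s : ℕ × ℕ → ℝ≥0∞) {B : Set S}
    (hB : MeasurableSet B) : configMeasure e s B = (s ⁻¹' (e '' B)).encard := by
  rw [configMeasure, he.comap_apply, sum_dirac_apply _ (he.measurableSet_image' hB)]

theorem measurable_configMeasure (he : MeasurableEmbedding e) :
    Measurable (configMeasure e) := by
  refine measurable_of_measurable_coe _ fun B hB => ?_
  simp_rw [configMeasure, he.comap_apply, sum_apply _ (he.measurableSet_image' hB),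
    dirac_apply' _ (he.measurableSet_image' hB)]
  exact .tsum fun p => (measurable_one.indicator (he.measurableSet_image' hB)).comp
    (measurable_pi_apply p)

theorem configMeasure_natValued (he : MeasurableEmbedding e) (s : ℕ × ℕ → ℝ≥0∞) {B : Set S}
    (hB : MeasurableSet B) : configMeasure e s B = ⊤ ∨ ∃ k : ℕ, configMeasure e s B = k := by
  rw [configMeasure_apply he s hB]
  induction (s ⁻¹' (e '' B)).encard using ENat.recTopCoe <;> simp

noncomputable def quantileConfig (e : S → ℝ≥0∞) (Sn : ℕ → Set S) (θ : Measure S)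
    (p : ℕ × ℕ) : ℝ≥0∞ :=
  ((θ.restrict (disjointed Sn p.1)).map e).quantile (p.2 + 1)

variable {Sn : ℕ → Set S} {θ : Measure S}

theorem isFiniteMeasure_restrict_disjointed (hfin : ∀ n, θ (Sn n) < ⊤) (n : ℕ) :
    IsFiniteMeasure (θ.restrict (disjointed Sn n)) :=
  isFiniteMeasure_restrict.mpr ((measure_mono (disjointed_subset Sn n)).trans_lt (hfin n)).ne

theorem configMeasure_quantileConfig (he : MeasurableEmbedding e) (he_top : ∀ x, e x ≠ ⊤)
    (hSn : ∀ n, MeasurableSet (Sn n)) (hexh : ⋃ n, Sn n = univ)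
    (hnat : ∀ B, MeasurableSet B → θ B = ⊤ ∨ ∃ k : ℕ, θ B = k) (hfin : ∀ n, θ (Sn n) < ⊤) :
    configMeasure e (quantileConfig e Sn θ) = θ := by
  ext B hB
  have hA : MeasurableSet (e '' B) := he.measurableSet_image' hB
  have htop : ⊤ ∉ e '' B := fun ⟨x, _, hx⟩ => he_top x hx
  have hnat' (n : ℕ) (a : ℝ≥0∞) : ∃ k : ℕ, (θ.restrict (disjointed Sn n)).map e (Iic a) = k := by
    have := isFiniteMeasure_restrict_disjointed hfin n
    have h := hnat (e ⁻¹' Iic a ∩ disjointed Sn n)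
      ((he.measurable measurableSet_Iic).inter (.disjointed hSn n))
    rw [← restrict_apply (he.measurable measurableSet_Iic), ← he.map_apply] at h
    exact h.resolve_left (measure_ne_top _ _)
  calc configMeasure e (quantileConfig e Sn θ) B
      = ∑' n, sum (fun j : ℕ => dirac (quantileConfig e Sn θ (n, j))) (e '' B) := by
        rw [configMeasure, he.comap_apply,
          ← sum_sum (fun n j => dirac (quantileConfig e Sn θ (n, j))), sum_apply _ hA]
    _ = ∑' n, θ.restrict (disjointed Sn n) B := tsum_congr fun n => by
        have := isFiniteMeasure_restrict_disjointed hfin n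
        simp only [quantileConfig]
        rw [sum_dirac_quantile_apply (hnat' n) hA htop, he.map_apply,
          he.injective.preimage_image]
    _ = θ B := by
        rw [← sum_apply _ hB, ← restrict_iUnion (disjoint_disjointed Sn) (.disjointed hSn),
          iUnion_disjointed, hexh, restrict_univ]

end Configurations

section NatValuedMeasures

variable {S : Type*} [MeasurableSpace S] {Sn : ℕ → Set S}

attribute [local instance] evalSigmaAlgebra

theorem evalSigmaAlgebra_eq_comap :
    evalSigmaAlgebra S Sn = .comap (fun θ : NatValuedMeasures S Sn => θ.val) inferInstance := by
  simp only [evalSigmaAlgebra, Measure.instMeasurableSpace, MeasurableSpace.comap_iSup,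
    MeasurableSpace.comap_comp]
  rfl

theorem NatValuedMeasures.measurable_iff {α : Type*} [MeasurableSpace α]
    {f : α → NatValuedMeasures S Sn} : Measurable f ↔ Measurable fun a => (f a).val := by
  rw [measurable_iff_comap_le, measurable_iff_comap_le, evalSigmaAlgebra_eq_comap,
    MeasurableSpace.comap_comp]
  rfl

theorem measurable_quantileConfig {e : S → ℝ≥0∞} (he : MeasurableEmbedding e)
    (hSn : ∀ n, MeasurableSet (Sn n)) :
    Measurable fun θ : NatValuedMeasures S Sn => quantileConfig e Sn θ.val := by
  refine measurable_pi_lambda _ fun p => measurable_of_Iic fun a => ?_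
  by_cases ha : a = ⊤
  · simp [ha]
  have hA : MeasurableSet (e ⁻¹' Iic a ∩ disjointed Sn p.1) :=
    (he.measurable measurableSet_Iic).inter (.disjointed hSn p.1)
  have : (fun θ : NatValuedMeasures S Sn => quantileConfig e Sn θ.val p) ⁻¹' Iic a =
      (fun θ : NatValuedMeasures S Sn => θ.val (e ⁻¹' Iic a ∩ disjointed Sn p.1)) ⁻¹'
        Ici (p.2 + 1) := by
    ext θ
    have := isFiniteMeasure_restrict_disjointed θ.2.2 p.1
    simp only [mem_preimage, mem_Iic, mem_Ici, quantileConfig, quantile_le_iff_of_ne_top ha,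
      he.map_apply, restrict_apply (he.measurable measurableSet_Iic)]
  rw [this]
  exact ((measurable_coe hA).comp (NatValuedMeasures.measurable_iff.mp measurable_id))
    measurableSet_Ici

end NatValuedMeasures

theorem natValuedMeasures_standardBorel_general
    (S : Type*) [TopologicalSpace S] [PolishSpace S] [MeasurableSpace S] [BorelSpace S]
    (Sn : ℕ → Set S) (hSn : ∀ n, MeasurableSet (Sn n))
    (hexh : ⋃ n, Sn n = Set.univ) :
    ∃ τ : TopologicalSpace (NatValuedMeasures S Sn),
      @PolishSpace (NatValuedMeasures S Sn) τ ∧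
        @borel (NatValuedMeasures S Sn) τ = evalSigmaAlgebra S Sn := by
  let := evalSigmaAlgebra S Sn
  suffices StandardBorelSpace (NatValuedMeasures S Sn) by
    obtain ⟨τ, hb, hp⟩ := this.polish
    exact ⟨τ, hp, hb.measurable_eq.symm⟩
  obtain ⟨e, he, he_top⟩ := exists_measurableEmbedding_ennreal_ne_top S
  have hψ (θ : NatValuedMeasures S Sn) : configMeasure e (quantileConfig e Sn θ.val) = θ.val :=
    configMeasure_quantileConfig he he_top hSn hexh θ.2.1 θ.2.2
  have hfin : MeasurableSet {s | ∀ n, configMeasure e s (Sn n) < ⊤} := by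
    simp only [ofPred_forall]
    exact .iInter fun n => measurableSet_lt
      ((measurable_coe (hSn n)).comp (measurable_configMeasure he)) measurable_const
  have := hfin.standardBorel
  let φ : NatValuedMeasures S Sn → {s | ∀ n, configMeasure e s (Sn n) < ⊤} :=
    fun θ => ⟨quantileConfig e Sn θ.val, by simpa [hψ θ] using θ.2.2⟩
  let ψ : {s | ∀ n, configMeasure e s (Sn n) < ⊤} → NatValuedMeasures S Sn :=
    fun s => ⟨configMeasure e s, fun _ hB => configMeasure_natValued he s hB, s.2⟩
  exact StandardBorelSpace.of_leftInverse (f := φ) (g := ψ)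
    (measurable_quantileConfig he hSn).subtype_mk
    (NatValuedMeasures.measurable_iff.mpr
      ((measurable_configMeasure he).comp measurable_subtype_coe))
    fun θ => Subtype.ext (hψ θ)

/-- Let `S` be a Polish space with an increasing exhausting sequence `Sn` of measurable
sets. Then the space `M` of `(ℕ ∪ {∞})`-valued measures that are finite on each `Sn`,
equipped with the σ-algebra generated by the evaluation maps, is a Polish (standard
Borel) measurable space: there is a Polish topology on `M` whose Borel σ-algebra is
exactly the evaluation σ-algebra. -/
theorem natValuedMeasures_standardBorel
    (S : Type*) [TopologicalSpace S] [PolishSpace S] [MeasurableSpace S] [BorelSpace S]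
    (Sn : ℕ → Set S) (hSn : ∀ n, MeasurableSet (Sn n)) (hmono : Monotone Sn)
    (hexh : ⋃ n, Sn n = Set.univ) :
    ∃ τ : TopologicalSpace (NatValuedMeasures S Sn),
      @PolishSpace (NatValuedMeasures S Sn) τ ∧
        @borel (NatValuedMeasures S Sn) τ = evalSigmaAlgebra S Sn :=
  natValuedMeasures_standardBorel_general S Sn hSn hexh
end

section
/- Let S be a Polish space with Borel σ-algebra 𝒮 and let ν be a σ-finite measure on (S, 𝒮) (so there exist S_n ∈ 𝒮 with S_n ↑ S and ν(S_n) < ∞ for all n). Let (Ω, ℱ, ℙ) and (Ω♯, ℱ♯, ℙ♯) be probability spaces carrying measurable maps η : Ω → Measure(S) and η♯ : Ω♯ → Measure(S) (the space of measures on S carrying the σ-algebra generated by the evaluation maps θ ↦ θ(B), B ∈ 𝒮), each of which is a Poisson random measure with intensity ν, i.e.: a.e. realization is an (ℕ ∪ {∞})-valued measure; for every B ∈ 𝒮 with ν(B) < ∞ the random variable given by evaluation at B is Poisson with parameter ν(B), and for ν(B) = ∞ it equals ∞ a.s.; and evaluations at pairwise disjoint measurable sets are mutually independent. Then η and η♯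 have the same law: the pushforward of ℙ under η equals the pushforward of ℙ♯ under η♯ as measures on Measure(S). -/
open MeasureTheory ProbabilityTheory
open scoped ENNReal

/-- `η : Ω → Measure S` is a Poisson random measure over the probability measure `P`
with intensity `ν` if: it is measurable (w.r.t. the σ-algebra on `Measure S` generated
by the evaluation maps), a.e. realization is an `(ℕ ∪ {∞})`-valued measure, for every
measurable `B` with `ν B < ∞` the evaluation `η(·)(B)` is Poisson distributed with
parameter `ν B` (and `= ∞` a.s. whenever `ν B = ∞`), and evaluations at pairwise
disjoint measurable sets are mutually independent. -/
def IsPoissonRandomMeasure {S Ω : Type*} [MeasurableSpace S] [MeasurableSpace Ω]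
    (P : Measure Ω) (ν : Measure S) (η : Ω → Measure S) : Prop :=
  Measurable η ∧
  (∀ᵐ ω ∂P, ∀ B : Set S, MeasurableSet B → η ω B = ⊤ ∨ ∃ k : ℕ, η ω B = k) ∧
  (∀ B : Set S, MeasurableSet B → ν B < ⊤ → ∀ k : ℕ,
    P {ω | η ω B = k} =
      ENNReal.ofReal (Real.exp (-(ν B).toReal)) * (ν B) ^ k / (Nat.factorial k)) ∧
  (∀ B : Set S, MeasurableSet B → ν B = ⊤ → ∀ᵐ ω ∂P, η ω B = ⊤) ∧
  (∀ (n : ℕ) (B : Fin n → Set S), (∀ i, MeasurableSet (B i)) →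
    Pairwise (Function.onFun Disjoint B) →
    iIndepFun (fun i ω => η ω (B i)) P)

/-!
A law on `Measure S` is determined by its finite-dimensional distributions, the joint laws of
`(θ (B₁), …, θ (Bₙ))`. Splitting `B₁, …, Bₙ` into the atoms of the Boolean algebra they
generate, each `θ (Bᵢ)` is a sum of evaluations at pairwise disjoint sets. For a Poisson random
measure these evaluations are independent, each with the law fixed by the intensity: the
Poisson weights on `ℕ` and the remaining mass on `∞`. Hence the two random measures have the
same finite-dimensional distributions.
-/

open Set

namespace MeasureTheory.Measure

section Countable

variable {α : Type*} [MeasurableSpace α] [MeasurableSingletonClass α] {μ ν : Measure α}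

theorem measure_eq_of_countable_of_singleton {t : Set α} (ht : t.Countable)
    (h : ∀ a ∈ t, μ {a} = ν {a}) : μ t = ν t := by
  have hsing : ∀ a ∈ t, MeasurableSet (id ⁻¹' {a} : Set α) :=
    fun a _ => measurableSet_singleton a
  rw [← preimage_id (s := t), ← tsum_measure_preimage_singleton ht hsing,
    ← tsum_measure_preimage_singleton ht hsing]
  exact tsum_congr fun a => h a a.2

/-- The mass of the excepted atom `a` is recovered from the total mass. -/
theorem ext_of_countable_of_singleton_ne [IsFiniteMeasure μ] {s : Set α} (hs : s.Countable)
    (hμ : μ sᶜ = 0) (hν : ν sᶜ = 0) (huniv : μ univ = ν univ) {a : α}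
    (h : ∀ b ∈ s, b ≠ a → μ {b} = ν {b}) : μ = ν := by
  have hrest : μ (s \ {a}) = ν (s \ {a}) :=
    measure_eq_of_countable_of_singleton (hs.mono sdiff_subset) fun b hb => h b hb.1 hb.2
  have hcompl : ∀ m : Measure α, m sᶜ = 0 → m (s \ {a})ᶜ = m {a} := fun m hm => by
    rw [compl_sdiff]
    exact le_antisymm ((measure_union_le _ _).trans (by rw [hm, add_zero]))
      (measure_mono subset_union_left)
  have hdecomp : ∀ m : Measure α, m sᶜ = 0 → m (s \ {a}) + m {a} = m univ := fun m hm => by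
    rw [← hcompl m hm, measure_add_measure_compl (hs.mono sdiff_subset).measurableSet]
  have ha : μ {a} = ν {a} := by
    have := (hdecomp μ hμ).trans (huniv.trans (hdecomp ν hν).symm)
    rwa [hrest, ENNReal.add_right_inj (hrest ▸ measure_ne_top μ _)] at this
  ext t -
  rw [← measure_inter_conull (s := t) hμ, ← measure_inter_conull (s := t) hν]
  refine measure_eq_of_countable_of_singleton (hs.mono inter_subset_right) fun b hb => ?_
  obtain rfl | hba := eq_or_ne b a
  exacts [ha, h b hb.2 hba]

end Countable

variable {S : Type*} [MeasurableSpace S]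

theorem measurable_eval_pi {ι : Type*} {D : ι → Set S} (hD : ∀ i, MeasurableSet (D i)) :
    Measurable fun (θ : Measure S) i => θ (D i) :=
  measurable_pi_lambda _ fun i => measurable_coe (hD i)

/-- The σ-algebra on `Measure S` is pulled back from the product σ-algebra along
`θ ↦ (θ B)_B`, and a law on the product is the projective limit of its finite marginals. -/
theorem ext_of_map_eval_finset {μ μ' : Measure (Measure S)} [IsFiniteMeasure μ]
    (h : ∀ I : Finset {B : Set S // MeasurableSet B},
      μ.map (fun θ (B : I) => θ B) = μ'.map (fun θ (B : I) => θ B)) :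
    μ = μ' := by
  let E : Measure S → {B : Set S // MeasurableSet B} → ℝ≥0∞ := fun θ B => θ B
  have hE : Measurable E := measurable_eval_pi fun B => B.2
  have hcomap : instMeasurableSpace = MeasurableSpace.comap E MeasurableSpace.pi :=
    le_antisymm (measurable_of_measurable_coe (mβ := .comap E .pi) id fun B hB =>
      (measurable_pi_apply (⟨B, hB⟩ : {B : Set S // MeasurableSet B})).comp
        (comap_measurable E)).le_map hE.comap_le
  have hlim : ∀ ρ : Measure (Measure S),
      IsProjectiveLimit (ρ.map E) (fun I => ρ.map fun θ (B : I) => θ B) := fun ρ I => by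
    rw [map_map (Finset.measurable_restrict I) hE]
    rfl
  have hmap : μ.map E = μ'.map E :=
    (hlim μ).unique fun I => (hlim μ' I).trans (h I).symm
  ext A hA
  obtain ⟨A', hA', rfl⟩ : MeasurableSet[.comap E .pi] A := hcomap ▸ hA
  rw [← map_apply hE hA', hmap, map_apply hE hA']

end MeasureTheory.Measure

namespace IsPoissonRandomMeasure

variable {S Ω Ω' : Type*} [MeasurableSpace S] [MeasurableSpace Ω] [MeasurableSpace Ω']
  {P : Measure Ω} {P' : Measure Ω'} {ν : Measure S} {η : Ω → Measure S} {η' : Ω' → Measure S}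
  {B : Set S} {ι : Type*}

theorem measurable_eval (hη : IsPoissonRandomMeasure P ν η) (hB : MeasurableSet B) :
    Measurable fun ω => η ω B :=
  (Measure.measurable_coe hB).comp hη.1

theorem measurable_eval_pi (hη : IsPoissonRandomMeasure P ν η) {D : ι → Set S}
    (hD : ∀ i, MeasurableSet (D i)) : Measurable fun ω i => η ω (D i) :=
  (Measure.measurable_eval_pi hD).comp hη.1

theorem map_eval_compl_range_enat (hη : IsPoissonRandomMeasure P ν η) (hB : MeasurableSet B) :
    P.map (fun ω => η ω B) (range ((↑) : ℕ∞ → ℝ≥0∞))ᶜ = 0 := by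
  rw [Measure.map_apply (hη.measurable_eval hB) (countable_range _).measurableSet.compl]
  have hmem : ∀ᵐ ω ∂P, η ω B ∈ range ((↑) : ℕ∞ → ℝ≥0∞) := by
    filter_upwards [hη.2.1] with ω hω
    rcases hω B hB with h | ⟨k, h⟩
    exacts [⟨⊤, h.symm⟩, ⟨k, h.symm⟩]
  exact ae_iff.mp hmem

theorem map_eval_singleton_natCast (hη : IsPoissonRandomMeasure P ν η) (hB : MeasurableSet B)
    (k : ℕ) :
    P.map (fun ω => η ω B) {(k : ℝ≥0∞)} =
      if ν B < ⊤ then ENNReal.ofReal (Real.exp (-(ν B).toReal)) * ν B ^ k / k.factorial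
      else 0 := by
  rw [Measure.map_apply (hη.measurable_eval hB) (measurableSet_singleton _)]
  split_ifs with hfin
  · exact hη.2.2.1 B hB hfin k
  · refine measure_mono_null (fun ω (hω : η ω B = k) => ?_)
      (ae_iff.mp (hη.2.2.2.1 B hB (not_lt_top_iff.mp hfin)))
    simp [hω]

theorem map_eval_eq [IsProbabilityMeasure P] [IsProbabilityMeasure P']
    (hη : IsPoissonRandomMeasure P ν η) (hη' : IsPoissonRandomMeasure P' ν η')
    (hB : MeasurableSet B) :
    P.map (fun ω => η ω B) = P'.map (fun ω => η' ω B) := by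
  have := Measure.isProbabilityMeasure_map (μ := P) (hη.measurable_eval hB).aemeasurable
  have := Measure.isProbabilityMeasure_map (μ := P') (hη'.measurable_eval hB).aemeasurable
  refine Measure.ext_of_countable_of_singleton_ne (countable_range _)
    (hη.map_eval_compl_range_enat hB) (hη'.map_eval_compl_range_enat hB) (by simp) (a := ⊤) ?_
  rintro _ ⟨k, rfl⟩ hne
  induction k using ENat.recTopCoe with
  | top => exact absurd rfl hne
  | coe k =>
    rw [ENat.toENNReal_coe, hη.map_eval_singleton_natCast hB, hη'.map_eval_singleton_natCast hB]

variable [Fintype ι]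

theorem iIndepFun_eval (hη : IsPoissonRandomMeasure P ν η) {D : ι → Set S}
    (hD : ∀ i, MeasurableSet (D i)) (hdisj : Pairwise (Function.onFun Disjoint D)) :
    iIndepFun (fun i ω => η ω (D i)) P := by
  let e := Fintype.equivFin ι
  have h := hη.2.2.2.2 _ (D ∘ e.symm) (fun j => hD _) (hdisj.comp_of_injective e.symm.injective)
  simpa using h.precomp e.injective

theorem map_eval_pi_eq_pi [IsProbabilityMeasure P] (hη : IsPoissonRandomMeasure P ν η)
    {D : ι → Set S} (hD : ∀ i, MeasurableSet (D i))
    (hdisj : Pairwise (Function.onFun Disjoint D)) :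
    P.map (fun ω i => η ω (D i)) = Measure.pi fun i => P.map fun ω => η ω (D i) :=
  (hη.iIndepFun_eval hD hdisj).map_fun_eq_pi_map fun i => (hη.measurable_eval (hD i)).aemeasurable

theorem map_eval_pi_eq [IsProbabilityMeasure P] [IsProbabilityMeasure P']
    (hη : IsPoissonRandomMeasure P ν η) (hη' : IsPoissonRandomMeasure P' ν η')
    {B : ι → Set S} (hB : ∀ i, MeasurableSet (B i)) :
    P.map (fun ω i => η ω (B i)) = P'.map (fun ω i => η' ω (B i)) := by
  classical
  let sign : S → ι → Bool := fun x i => decide (x ∈ B i)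
  have hsign : Measurable sign :=
    measurable_pi_lambda _ fun i => measurable_to_bool (by convert hB i using 1; ext; simp [sign])
  let atom : (ι → Bool) → Set S := fun σ => sign ⁻¹' {σ}
  have hatom : ∀ σ, MeasurableSet (atom σ) := fun σ => hsign (measurableSet_singleton σ)
  have hdisj : Pairwise (Function.onFun Disjoint atom) := fun σ τ hστ =>
    Disjoint.preimage sign (disjoint_singleton.mpr hστ)
  let T : ((ι → Bool) → ℝ≥0∞) → ι → ℝ≥0∞ := fun v i => ∑ σ with σ i, v σ
  have hT : Measurable T := by fun_prop
  have hfactor : ∀ θ : Measure S, (fun i => θ (B i)) = T fun σ => θ (atom σ) := fun θ => by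
    ext i
    change θ (B i) = ∑ σ with σ i, θ (sign ⁻¹' {σ})
    rw [sum_measure_preimage_singleton _ fun σ _ => hatom σ]
    congr 1
    ext x
    simp [sign]
  have hatoms : P.map (fun ω σ => η ω (atom σ)) = P'.map (fun ω σ => η' ω (atom σ)) := by
    rw [hη.map_eval_pi_eq_pi hatom hdisj, hη'.map_eval_pi_eq_pi hatom hdisj]
    simp_rw [hη.map_eval_eq hη' (hatom _)]
  rw [show (fun ω i => η ω (B i)) = T ∘ fun ω σ => η ω (atom σ) from funext fun ω => hfactor _,
    show (fun ω i => η' ω (B i)) = T ∘ fun ω σ => η' ω (atom σ) from funext fun ω => hfactor _,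
    ← Measure.map_map hT (hη.measurable_eval_pi hatom),
    ← Measure.map_map hT (hη'.measurable_eval_pi hatom), hatoms]

end IsPoissonRandomMeasure

theorem poisson_random_measure_unique_law_general
    (S : Type) [MeasurableSpace S]
    (ν : Measure S)
    {Ω Ω' : Type*} [MeasurableSpace Ω] [MeasurableSpace Ω']
    (P : Measure Ω) (P' : Measure Ω')
    [IsProbabilityMeasure P] [IsProbabilityMeasure P']
    (η : Ω → Measure S) (η' : Ω' → Measure S)
    (hη : IsPoissonRandomMeasure P ν η) (hη' : IsPoissonRandomMeasure P' ν η') :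
    Measure.map η P = Measure.map η' P' := by
  have := Measure.isProbabilityMeasure_map (μ := P) hη.1.aemeasurable
  refine Measure.ext_of_map_eval_finset fun I => ?_
  have hI : ∀ B : I, MeasurableSet (B : Set S) := fun B => B.1.2
  rw [Measure.map_map (Measure.measurable_eval_pi hI) hη.1,
    Measure.map_map (Measure.measurable_eval_pi hI) hη'.1]
  exact hη.map_eval_pi_eq hη' hI

/-- Uniqueness in law of Poisson random measures: two Poisson random measures with the
same σ-finite intensity `ν` on a Polish space `S`, possibly defined over different
probability spaces, have the same law on the space of measures on `S`. -/
theorem poisson_random_measure_unique_law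
    (S : Type) [TopologicalSpace S] [PolishSpace S] [MeasurableSpace S] [BorelSpace S]
    (ν : Measure S) [SigmaFinite ν]
    {Ω Ω' : Type*} [MeasurableSpace Ω] [MeasurableSpace Ω']
    (P : Measure Ω) (P' : Measure Ω')
    [IsProbabilityMeasure P] [IsProbabilityMeasure P']
    (η : Ω → Measure S) (η' : Ω' → Measure S)
    (hη : IsPoissonRandomMeasure P ν η) (hη' : IsPoissonRandomMeasure P' ν η') :
    Measure.map η P = Measure.map η' P' :=
  poisson_random_measure_unique_law_general S ν P P' η η' hη hη'
end
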